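/- Let A = Z/2[y_4, y_6] be a graded polynomial ring with deg y_4 = 4, deg y_6 = 6, let B = Z/2[x_2, x_4] with deg x_2 = 2, deg x_4 = 4, and make B an A-module via the ring map π^* with π^*(y_4) = x_2^2 + x_4 and π^*(y_6) = x_2 x_4. Then B is a free A-module with basis {1, x_2, x_2^2}. -/

import Mathlib

/-! The element `x₂` is a root of the monic cubic `T³ - y₄ T + y₆` over `A`, since
`x₂³ - (x₂² + x₄) x₂ + x₂ x₄ = 0`. The induced map `A[T]/(T³ - y₄ T + y₆) → B` is an
isomorphism, with inverse `x₂ ↦ T`, `x₄ ↦ y₄ - T²`, so `B` inherits the power basis `1, T, T²`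
of `A[T]/(T³ - y₄ T + y₆)`.
With these signs no computation needs characteristic 2. -/

open MvPolynomial

noncomputable section

/-- `A = ℤ/2[y₄, y₆]` (the cohomology of `BSU(3)`). -/
abbrev A15 := MvPolynomial (Fin 2) (ZMod 2)
/-- `B = ℤ/2[x₂, x₄]` (the cohomology of `BS(U(2)×U(1))`). -/
abbrev B15 := MvPolynomial (Fin 2) (ZMod 2)

def y₄ : A15 := X 0
def y₆ : A15 := X 1
def x₂ : B15 := X 0
def x₄ : B15 := X 1

/-- The ring map `π* : A → B` with `π*(y₄) = x₂² + x₄`, `π*(y₆) = x₂ x₄`. -/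
def πs : A15 →+* B15 := (aeval ![x₂ ^ 2 + x₄, x₂ * x₄] : A15 →ₐ[ZMod 2] B15).toRingHom

theorem AdjoinRoot.existsUnique_eq_sum_mul_pow_of_bijective_lift {R S : Type*} [CommRing R]
    [CommRing S] {φ : R →+* S} {x : S} {p : Polynomial R} {n : ℕ} (hp : p.Monic)
    (hn : p.natDegree = n) (hx : p.eval₂ φ x = 0)
    (hbij : Function.Bijective (AdjoinRoot.lift φ x hx)) (s : S) :
    ∃! c : Fin n → R, s = ∑ i, φ (c i) * x ^ (i : ℕ) := by
  obtain ⟨pb, rfl, hgen⟩ : ∃ pb : PowerBasis R (AdjoinRoot p),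
      pb.dim = n ∧ pb.gen = AdjoinRoot.root p :=
    ⟨AdjoinRoot.powerBasis' hp, hn, rfl⟩
  have hsum : ∀ c : Fin pb.dim → R,
      AdjoinRoot.lift φ x hx (pb.basis.equivFun.symm c) = ∑ i, φ (c i) * x ^ (i : ℕ) := by
    intro c
    simp only [Module.Basis.equivFun_symm_apply, PowerBasis.coe_basis, hgen, map_sum,
      Algebra.smul_def, map_mul, map_pow, AdjoinRoot.algebraMap_eq, AdjoinRoot.lift_of,
      AdjoinRoot.lift_root]
  simpa only [Function.comp_apply, hsum, eq_comm (a := s)] using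
    (hbij.comp pb.basis.equivFun.symm.bijective).existsUnique s

lemma πs_y₄ : πs y₄ = x₂ ^ 2 + x₄ := by simp [πs, y₄]

lemma πs_y₆ : πs y₆ = x₂ * x₄ := by simp [πs, y₆]

def x₂Cubic : Polynomial A15 :=
  Polynomial.X ^ 3 - Polynomial.C y₄ * Polynomial.X + Polynomial.C y₆

lemma x₂Cubic_monic : x₂Cubic.Monic := by unfold x₂Cubic; monicity!

lemma x₂Cubic_natDegree : x₂Cubic.natDegree = 3 := by unfold x₂Cubic; compute_degree!

lemma x₂Cubic_eval₂_x₂ : x₂Cubic.eval₂ πs x₂ = 0 := by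
  simp only [x₂Cubic, Polynomial.eval₂_add, Polynomial.eval₂_sub, Polynomial.eval₂_mul,
    Polynomial.eval₂_X_pow, Polynomial.eval₂_X, Polynomial.eval₂_C, πs_y₄, πs_y₆]
  ring

lemma root_x₂Cubic_pow_three : AdjoinRoot.root x₂Cubic ^ 3 =
    AdjoinRoot.of x₂Cubic y₄ * AdjoinRoot.root x₂Cubic - AdjoinRoot.of x₂Cubic y₆ := by
  have h : (Polynomial.X ^ 3 - Polynomial.C y₄ * Polynomial.X + Polynomial.C y₆).eval₂
      (AdjoinRoot.of x₂Cubic) (AdjoinRoot.root x₂Cubic) = 0 :=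
    AdjoinRoot.eval₂_root x₂Cubic
  simp only [Polynomial.eval₂_add, Polynomial.eval₂_sub, Polynomial.eval₂_mul,
    Polynomial.eval₂_X_pow, Polynomial.eval₂_X, Polynomial.eval₂_C] at h
  linear_combination h

def toAdjoinRoot : B15 →+* AdjoinRoot x₂Cubic :=
  eval₂Hom ((AdjoinRoot.of x₂Cubic).comp C)
    ![AdjoinRoot.root x₂Cubic, AdjoinRoot.of x₂Cubic y₄ - AdjoinRoot.root x₂Cubic ^ 2]

lemma toAdjoinRoot_x₂ : toAdjoinRoot x₂ = AdjoinRoot.root x₂Cubic := by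
  simp [toAdjoinRoot, x₂]

lemma toAdjoinRoot_comp_πs : toAdjoinRoot.comp πs = AdjoinRoot.of x₂Cubic := by
  refine ringHom_ext' (RingHom.ext_zmod _ _) fun i => ?_
  fin_cases i
  · change toAdjoinRoot (πs y₄) = AdjoinRoot.of x₂Cubic y₄
    simp [πs_y₄, toAdjoinRoot, x₂, x₄]
  · change toAdjoinRoot (πs y₆) = AdjoinRoot.of x₂Cubic y₆
    simp only [πs_y₆, toAdjoinRoot, x₂, x₄, coe_eval₂Hom, eval₂_mul, eval₂_X,
      Matrix.cons_val_zero, Matrix.cons_val_one, Matrix.cons_val_fin_one]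
    linear_combination -root_x₂Cubic_pow_three

lemma lift_comp_toAdjoinRoot :
    (AdjoinRoot.lift πs x₂ x₂Cubic_eval₂_x₂).comp toAdjoinRoot = RingHom.id B15 := by
  refine ringHom_ext' (RingHom.ext_zmod _ _) fun i => ?_
  fin_cases i
  · simp [toAdjoinRoot, x₂]
  · change AdjoinRoot.lift πs x₂ x₂Cubic_eval₂_x₂ (toAdjoinRoot x₄) = x₄
    simp [toAdjoinRoot, x₄, πs_y₄]

lemma toAdjoinRoot_comp_lift :
    toAdjoinRoot.comp (AdjoinRoot.lift πs x₂ x₂Cubic_eval₂_x₂) = RingHom.id _ :=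
  AdjoinRoot.ringHom_ext
    (by rw [RingHom.comp_assoc, AdjoinRoot.lift_comp_of, toAdjoinRoot_comp_πs]; rfl)
    (by simp [toAdjoinRoot_x₂])

/-- Leray–Hirsch: `B` is a free `A`-module (via `π*`) with basis `{1, x₂, x₂²}`:
every element of `B` is uniquely of the form `Σ_{i<3} π*(cᵢ)·x₂^i`. -/
theorem stmt_15 (b : B15) :
    ∃! c : Fin 3 → A15, b = ∑ i : Fin 3, πs (c i) * x₂ ^ (i : ℕ) := by
  refine AdjoinRoot.existsUnique_eq_sum_mul_pow_of_bijective_lift x₂Cubic_monic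
    x₂Cubic_natDegree x₂Cubic_eval₂_x₂ ?_ b
  rw [Function.bijective_iff_has_inverse]
  exact ⟨toAdjoinRoot, RingHom.congr_fun toAdjoinRoot_comp_lift,
    RingHom.congr_fun lift_comp_toAdjoinRoot⟩

end
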